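/- Let w ∈ E⁺ admit a factorisation w = uev with u, v ∈ E* and e ∈ E such that ē 𝓓 w̄ in IG(E). Then w̄ is a regular element of IG(E), and (ue)‾ 𝓛 ē 𝓡 (ev)‾ in IG(E) (so the occurrence of e is a seed of w). -/

import Mathlib

section Green

variable {T : Type*} [Semigroup T]

/-- Green's relation 𝓡. -/
def GreenR (a b : T) : Prop := a = b ∨ ∃ x y : T, a * x = b ∧ b * y = a

/-- Green's relation 𝓛. -/
def GreenL (a b : T) : Prop := a = b ∨ ∃ x y : T, x * a = b ∧ y * b = a

/-- Green's relation 𝓓 = 𝓡 ∘ 𝓛. -/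
def GreenD (a b : T) : Prop := ∃ c : T, GreenR a c ∧ GreenL c b

/-- An element is regular if `a = a * b * a` for some `b`. -/
def IsRegularElem (a : T) : Prop := ∃ b : T, a * b * a = a

/-- The principal two-sided ideal `T¹ a T¹`. -/
def principalIdeal (a : T) : Set T :=
  {x | x = a ∨ (∃ u, u * a = x) ∨ (∃ v, a * v = x) ∨ ∃ u v, u * a * v = x}

/-- Green's relation 𝓙. -/
def GreenJ (a b : T) : Prop := principalIdeal a = principalIdeal b

/-- The 𝓙-preorder. -/
def JleRel (a b : T) : Prop := principalIdeal a ⊆ principalIdeal b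

/-- Strict 𝓙-order. -/
def JltRel (a b : T) : Prop := JleRel a b ∧ ¬ JleRel b a

/-- `u` is a (two-sided) identity element. -/
def IsIdentityElem (u : T) : Prop := ∀ x : T, u * x = x ∧ x * u = x

/-- The relation 𝓡̃. -/
def RTilde (a b : T) : Prop := ∀ ε : T, ε * ε = ε → (ε * a = a ↔ ε * b = b)

/-- The relation 𝓛̃. -/
def LTilde (a b : T) : Prop := ∀ ε : T, ε * ε = ε → (a * ε = a ↔ b * ε = b)

/-- `blockProd p i k = p i * p (i+1) * ⋯ * p (i+k)`. -/
def blockProd (p : ℕ → T) (i : ℕ) : ℕ → T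
  | 0 => p i
  | k + 1 => blockProd p i k * p (i + (k + 1))

/-- Multiply `x` by optional (possibly empty) words on both sides. -/
def withCtx (u : Option T) (x : T) (v : Option T) : T :=
  match u, v with
  | none, none => x
  | some u', none => u' * x
  | none, some v' => x * v'
  | some u', some v' => u' * x * v'

/-- Multiply by an optional word on the left. -/
def leftCtx (u : Option T) (x : T) : T := match u with | none => x | some u' => u' * x

/-- Multiply by an optional word on the right. -/
def rightCtx (x : T) (v : Option T) : T := match v with | none => x | some v' => x * v'

end Green

section IGdef

/-- The set of idempotents of `S`. -/
abbrev IdemE (S : Type*) [Semigroup S] : Type _ := {x : S // x * x = x}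

variable {S : Type*} [Semigroup S]

/-- `e, f` form a basic pair if `{e,f} ∩ {ef,fe} ≠ ∅`. -/
def BasicPair (e f : IdemE S) : Prop :=
  (e : S) * f = e ∨ (e : S) * f = f ∨ (f : S) * e = e ∨ (f : S) * e = f

/-- The defining relations of IG(E): `ef = g` whenever `e, f` is a basic pair with
product `g` in `S`. -/
def igRelBase (u v : FreeSemigroup (IdemE S)) : Prop :=
  ∃ e f g : IdemE S, BasicPair e f ∧ (g : S) = (e : S) * (f : S) ∧
    u = FreeSemigroup.of e * FreeSemigroup.of f ∧ v = FreeSemigroup.of g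

/-- The congruence on the free semigroup `E⁺` generated by the defining relations. -/
def igCon (S : Type*) [Semigroup S] : Con (FreeSemigroup (IdemE S)) :=
  conGen (fun u v => igRelBase u v)

/-- The free idempotent generated semigroup IG(E). -/
abbrev IG (S : Type*) [Semigroup S] := (igCon S).Quotient

/-- `w̄`, the image of a word `w ∈ E⁺` in IG(E). -/
def igBar (w : FreeSemigroup (IdemE S)) : IG S := (w : (igCon S).Quotient)

/-- The list of letters of a word. -/
def wordList (w : FreeSemigroup (IdemE S)) : List (IdemE S) := w.head :: w.tail

/-- The length of a word. -/
def wlen (w : FreeSemigroup (IdemE S)) : ℕ := (wordList w).length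

/-- Length of an optional word. -/
def olen (u : Option (FreeSemigroup (IdemE S))) : ℕ :=
  match u with | none => 0 | some u' => wlen u'

/-- `p 1, …, p m` is an r-factorisation of `w`: each factor represents a regular
element of IG(E). -/
def IsRFact (w : FreeSemigroup (IdemE S)) (m : ℕ) (p : ℕ → FreeSemigroup (IdemE S)) : Prop :=
  1 ≤ m ∧ blockProd p 1 (m - 1) = w ∧ ∀ i, 1 ≤ i → i ≤ m → IsRegularElem (igBar (p i))

/-- A minimal r-factorisation: no product of two or more consecutive factors is regular. -/
def IsMinRFact (w : FreeSemigroup (IdemE S)) (m : ℕ) (p : ℕ → FreeSemigroup (IdemE S)) : Prop :=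
  IsRFact w m p ∧
    ∀ i j, 1 ≤ i → i < j → j ≤ m → ¬ IsRegularElem (igBar (blockProd p i (j - i)))

/-- The relation ≈ on m-tuples of words. -/
def TupleApprox (m : ℕ) (p q : ℕ → FreeSemigroup (IdemE S)) : Prop :=
  (∃ i, 1 ≤ i ∧ i ≤ m ∧ igBar (p i) = igBar (q i) ∧
    ∀ j, 1 ≤ j → j ≤ m → j ≠ i → p j = q j) ∨
  (∃ i, ∃ e : IdemE S, 1 ≤ i ∧ i < m ∧
    igBar (p i) = igBar (q i * FreeSemigroup.of e) ∧
    igBar (q (i + 1)) = igBar (FreeSemigroup.of e * p (i + 1)) ∧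
    ∀ j, 1 ≤ j → j ≤ m → j ≠ i → j ≠ i + 1 → p j = q j) ∨
  (∃ i, ∃ e : IdemE S, 1 ≤ i ∧ i < m ∧
    igBar (q i) = igBar (p i * FreeSemigroup.of e) ∧
    igBar (p (i + 1)) = igBar (FreeSemigroup.of e * q (i + 1)) ∧
    ∀ j, 1 ≤ j → j ≤ m → j ≠ i → j ≠ i + 1 → p j = q j)

/-- The relation ∼: the transitive closure of ≈. -/
def TupleSim (m : ℕ) (p q : ℕ → FreeSemigroup (IdemE S)) : Prop :=
  Relation.TransGen (TupleApprox m) p q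

/-- One application of a defining relation of IG(E) inside a word. -/
def RewriteStep (w w' : FreeSemigroup (IdemE S)) : Prop :=
  ∃ (u v : Option (FreeSemigroup (IdemE S))) (x y : FreeSemigroup (IdemE S)),
    (igRelBase x y ∨ igRelBase y x) ∧ w = withCtx u x v ∧ w' = withCtx u y v

/-- `e` is a seed of `w` at (1-based) position `k`. -/
def SeedAt (w : FreeSemigroup (IdemE S)) (e : IdemE S) (k : ℕ) : Prop :=
  ∃ u v : Option (FreeSemigroup (IdemE S)),
    w = withCtx u (FreeSemigroup.of e) v ∧ k = olen u + 1 ∧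
    GreenL (igBar (leftCtx u (FreeSemigroup.of e))) (igBar (FreeSemigroup.of e)) ∧
    GreenR (igBar (FreeSemigroup.of e)) (igBar (rightCtx (FreeSemigroup.of e) v))

/-- The coordinate (position within `w` of the first letter) of the `i`-th factor. -/
def wcoord (p : ℕ → FreeSemigroup (IdemE S)) (i : ℕ) : ℕ :=
  1 + ∑ j ∈ Finset.Ico 1 i, wlen (p j)

end IGdef

/-!
Since `ē 𝓓 w̄` and `ē` is idempotent, `ē = x w̄ y`; pick a word `W = x' u e v y'` spelling `ē`.
Call an occurrence of a letter `f` in a word a seed if the prefix ending with `f` is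
`𝓛`-related to `f̄` and the suffix starting with `f` is `𝓡`-related to `f̄`. For a fixed value
`d`, the property "every occurrence of a letter in the `𝓓`-class of `d` is a seed" survives each
elementary rewriting `pq ↔ r` between words of value `d`. When merging, `pqp = p` or `qpq = q`
for a basic pair, so `r̄` is `𝓡`-related to `p̄` or `𝓛`-related to `q̄`. When expanding, the new
letter in the `𝓓`-class of `d` lies `𝓙`-below `r` in `S`, and stability of `S` (a consequence
of the finiteness of `E`) gives `rp = p` or `qr = q`. The one-letter word `e` has the property,
hence so does `W`: its occurrence of `e` is a seed, and cancelling `x'` and `y'` gives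
`(ue)‾ 𝓛 ē 𝓡 (ev)‾`. Regularity of `w̄` is inherited from the idempotent `ē` of its `𝓓`-class.
-/

theorem List.append_append_eq_append_cons {α : Type*} {l₁ s l₂ m₁ m₂ : List α} {f : α}
    (h : l₁ ++ s ++ l₂ = m₁ ++ f :: m₂) :
    (∃ k, l₁ = m₁ ++ f :: k ∧ m₂ = k ++ s ++ l₂) ∨
    (∃ k₁ k₂, s = k₁ ++ f :: k₂ ∧ m₁ = l₁ ++ k₁ ∧ m₂ = k₂ ++ l₂) ∨
    (∃ k, m₁ = l₁ ++ s ++ k ∧ l₂ = k ++ f :: m₂) := by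
  rw [List.append_assoc, List.append_eq_append_iff] at h
  rcases h with ⟨a, rfl, h⟩ | ⟨c, rfl, h⟩
  · rw [List.append_eq_append_iff] at h
    rcases h with ⟨b, rfl, h⟩ | ⟨c, rfl, h⟩
    · exact Or.inr (Or.inr ⟨b, by simp, h⟩)
    · rcases c with _ | ⟨g, c⟩
      · exact Or.inr (Or.inr ⟨[], by simp, by simpa using h.symm⟩)
      · simp only [List.cons_append, List.cons.injEq] at h
        exact Or.inr (Or.inl ⟨a, c, by simp [h.1], rfl, h.2⟩)
  · rcases c with _ | ⟨g, c⟩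
    · simp only [List.nil_append] at h
      rcases s with _ | ⟨g, s⟩
      · exact Or.inr (Or.inr ⟨[], by simp, by simpa using h.symm⟩)
      · simp only [List.cons_append, List.cons.injEq] at h
        exact Or.inr (Or.inl ⟨[], s, by simp [h.1], by simp, h.2⟩)
    · simp only [List.cons_append, List.cons.injEq] at h
      exact Or.inl ⟨c, by simp [h.1], by simp [h.2]⟩

theorem List.singleton_eq_append_cons {α : Type*} {a f : α} {k₁ k₂ : List α}
    (h : [a] = k₁ ++ f :: k₂) : k₁ = [] ∧ f = a ∧ k₂ = [] := by
  rcases k₁ with _ | ⟨b, k₁⟩ <;> simp_all [eq_comm]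

theorem List.pair_eq_append_cons {α : Type*} {a b f : α} {k₁ k₂ : List α}
    (h : [a, b] = k₁ ++ f :: k₂) :
    (k₁ = [] ∧ f = a ∧ k₂ = [b]) ∨ (k₁ = [a] ∧ f = b ∧ k₂ = []) := by
  rcases k₁ with _ | ⟨c, _ | ⟨c', k₁⟩⟩ <;> simp_all [eq_comm]

theorem Relation.EqvGen.lift {α β : Type*} {r : α → α → Prop} {s : β → β → Prop} (f : α → β)
    (hf : ∀ a b, r a b → s (f a) (f b)) {a b : α} (h : Relation.EqvGen r a b) :
    Relation.EqvGen s (f a) (f b) := by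
  induction h with
  | rel a b hab => exact .rel _ _ (hf a b hab)
  | refl a => exact .refl _
  | symm a b _ ih => exact .symm _ _ ih
  | trans a b c _ _ ihab ihbc => exact .trans _ _ _ ihab ihbc

section GreenRelations

variable {T : Type*} [Semigroup T] {a b c d x : T}

theorem GreenR.refl (a : T) : GreenR a a := Or.inl rfl

theorem GreenL.refl (a : T) : GreenL a a := Or.inl rfl

theorem GreenR.symm (h : GreenR a b) : GreenR b a := by
  rcases h with rfl | ⟨x, y, hx, hy⟩
  exacts [Or.inl rfl, Or.inr ⟨y, x, hy, hx⟩]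

theorem GreenL.symm (h : GreenL a b) : GreenL b a := by
  rcases h with rfl | ⟨x, y, hx, hy⟩
  exacts [Or.inl rfl, Or.inr ⟨y, x, hy, hx⟩]

theorem GreenR.trans (h₁ : GreenR a b) (h₂ : GreenR b c) : GreenR a c := by
  rcases h₁ with rfl | ⟨x, y, hx, hy⟩
  · exact h₂
  rcases h₂ with rfl | ⟨s, t, hs, ht⟩
  · exact Or.inr ⟨x, y, hx, hy⟩
  exact Or.inr ⟨x * s, t * y, by rw [← mul_assoc, hx, hs], by rw [← mul_assoc, ht, hy]⟩

theorem GreenL.trans (h₁ : GreenL a b) (h₂ : GreenL b c) : GreenL a c := by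
  rcases h₁ with rfl | ⟨x, y, hx, hy⟩
  · exact h₂
  rcases h₂ with rfl | ⟨s, t, hs, ht⟩
  · exact Or.inr ⟨x, y, hx, hy⟩
  exact Or.inr ⟨s * x, y * t, by rw [mul_assoc, hx, hs], by rw [mul_assoc, ht, hy]⟩

theorem greenR_of_mul_eq (hab : a * b = b) (hba : b * a = a) : GreenR a b :=
  Or.inr ⟨b, a, hab, hba⟩

theorem greenL_of_mul_eq (hab : a * b = a) (hba : b * a = b) : GreenL a b :=
  Or.inr ⟨b, a, hba, hab⟩

theorem GreenL.exists_greenR_greenL (h₁ : GreenL a b) (h₂ : GreenR b c) :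
    ∃ d, GreenR a d ∧ GreenL d c := by
  rcases h₁ with rfl | ⟨x, y, hx, hy⟩
  · exact ⟨c, h₂, GreenL.refl c⟩
  rcases h₂ with rfl | ⟨s, t, hs, ht⟩
  · exact ⟨a, GreenR.refl a, Or.inr ⟨x, y, hx, hy⟩⟩
  refine ⟨a * s, Or.inr ⟨s, t, rfl, ?_⟩, Or.inr ⟨x, y, ?_, ?_⟩⟩
  · rw [← hy, mul_assoc y, hs, mul_assoc, ht]
  · rw [← mul_assoc, hx, hs]
  · rw [← hs, ← mul_assoc, hy]

theorem GreenD.refl (a : T) : GreenD a a := ⟨a, GreenR.refl a, GreenL.refl a⟩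

theorem GreenD.of_greenR (h : GreenR a b) (hd : GreenD b d) : GreenD a d := by
  obtain ⟨c, hbc, hcd⟩ := hd
  exact ⟨c, h.trans hbc, hcd⟩

theorem GreenD.of_greenL (h : GreenL a b) (hd : GreenD b d) : GreenD a d := by
  obtain ⟨c, hbc, hcd⟩ := hd
  obtain ⟨c', hac', hc'c⟩ := h.exists_greenR_greenL hbc
  exact ⟨c', hac', hc'c.trans hcd⟩

theorem IsRegularElem.of_greenR (ha : IsRegularElem a) (h : GreenR a b) : IsRegularElem b := by
  obtain ⟨z, hz⟩ := ha
  rcases h with rfl | ⟨x, y, rfl, hy⟩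
  · exact ⟨z, hz⟩
  refine ⟨y * z, ?_⟩
  rw [← mul_assoc (a * x), hy, ← mul_assoc, hz]

theorem IsRegularElem.of_greenL (ha : IsRegularElem a) (h : GreenL a b) : IsRegularElem b := by
  obtain ⟨z, hz⟩ := ha
  rcases h with rfl | ⟨x, y, rfl, hy⟩
  · exact ⟨z, hz⟩
  refine ⟨z * y, ?_⟩
  rw [mul_assoc (x * a), mul_assoc z, hy, mul_assoc x, ← mul_assoc a, hz]

theorem IsRegularElem.of_greenD (ha : IsRegularElem a) (h : GreenD a b) : IsRegularElem b := by
  obtain ⟨c, hac, hcb⟩ := h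
  exact (ha.of_greenR hac).of_greenL hcb

theorem GreenL.mul_right (h : GreenL a b) (hbc : b * c = c) : GreenL (a * c) c := by
  rcases h with rfl | ⟨x, y, hx, -⟩
  · rw [hbc]
    exact GreenL.refl c
  exact Or.inr ⟨x, a, by rw [← mul_assoc, hx, hbc], rfl⟩

theorem GreenR.mul_left (h : GreenR b a) (hcb : c * b = c) : GreenR c (c * a) := by
  rcases h with rfl | ⟨-, y, -, hy⟩
  · rw [hcb]
    exact GreenR.refl c
  exact Or.inr ⟨a, y, rfl, by rw [mul_assoc, hy, hcb]⟩

theorem GreenL.of_mul_left (h : GreenL (x * a) b) (hab : a * b = a) : GreenL a b := by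
  rcases h with h | ⟨s, -, hs, -⟩
  · exact Or.inr ⟨x, a, h, hab⟩
  · exact Or.inr ⟨s * x, a, by rw [mul_assoc, hs], hab⟩

theorem GreenR.of_mul_right (h : GreenR b (a * x)) (hba : b * a = a) : GreenR b a := by
  rcases h with h | ⟨-, t, -, ht⟩
  · exact Or.inr ⟨a, x, hba, h.symm⟩
  · exact Or.inr ⟨a, x * t, hba, by rw [← mul_assoc, ht]⟩

theorem mem_principalIdeal_self (a : T) : a ∈ principalIdeal a := Or.inl rfl

theorem mul_mem_principalIdeal (z : T) (h : x ∈ principalIdeal a) :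
    z * x ∈ principalIdeal a := by
  rcases h with rfl | ⟨u, rfl⟩ | ⟨v, rfl⟩ | ⟨u, v, rfl⟩
  · exact Or.inr (Or.inl ⟨z, rfl⟩)
  · exact Or.inr (Or.inl ⟨z * u, mul_assoc _ _ _⟩)
  · exact Or.inr (Or.inr (Or.inr ⟨z, v, mul_assoc _ _ _⟩))
  · exact Or.inr (Or.inr (Or.inr ⟨z * u, v, by simp only [mul_assoc]⟩))

theorem mem_principalIdeal_mul (z : T) (h : x ∈ principalIdeal a) :
    x * z ∈ principalIdeal a := by
  rcases h with rfl | ⟨u, rfl⟩ | ⟨v, rfl⟩ | ⟨u, v, rfl⟩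
  · exact Or.inr (Or.inr (Or.inl ⟨z, rfl⟩))
  · exact Or.inr (Or.inr (Or.inr ⟨u, z, rfl⟩))
  · exact Or.inr (Or.inr (Or.inl ⟨v * z, (mul_assoc _ _ _).symm⟩))
  · exact Or.inr (Or.inr (Or.inr ⟨u, v * z, (mul_assoc _ _ _).symm⟩))

theorem principalIdeal_trans (h₁ : x ∈ principalIdeal a) (h₂ : a ∈ principalIdeal b) :
    x ∈ principalIdeal b := by
  rcases h₁ with rfl | ⟨u, rfl⟩ | ⟨v, rfl⟩ | ⟨u, v, rfl⟩
  · exact h₂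
  · exact mul_mem_principalIdeal u h₂
  · exact mem_principalIdeal_mul v h₂
  · exact mem_principalIdeal_mul v (mul_mem_principalIdeal u h₂)

theorem GreenD.mem_principalIdeal (h : GreenD a b) : a ∈ principalIdeal b := by
  obtain ⟨c, hac, hcb⟩ := h
  have hac' : a ∈ principalIdeal c := by
    rcases hac with rfl | ⟨-, y, -, hy⟩
    exacts [mem_principalIdeal_self a, hy ▸ mem_principalIdeal_mul y (mem_principalIdeal_self c)]
  have hcb' : c ∈ principalIdeal b := by
    rcases hcb with rfl | ⟨-, y, -, hy⟩
    exacts [mem_principalIdeal_self c, hy ▸ mul_mem_principalIdeal y (mem_principalIdeal_self b)]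
  exact principalIdeal_trans hac' hcb'

theorem map_mem_principalIdeal {T' : Type*} [Semigroup T'] (φ : T →ₙ* T')
    (h : x ∈ principalIdeal a) : φ x ∈ principalIdeal (φ a) := by
  rcases h with rfl | ⟨u, rfl⟩ | ⟨v, rfl⟩ | ⟨u, v, rfl⟩
  · exact mem_principalIdeal_self _
  · exact Or.inr (Or.inl ⟨φ u, (map_mul φ u a).symm⟩)
  · exact Or.inr (Or.inr (Or.inl ⟨φ v, (map_mul φ a v).symm⟩))
  · exact Or.inr (Or.inr (Or.inr ⟨φ u, φ v, by rw [← map_mul, ← map_mul]⟩))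

theorem exists_mul_mul_eq_of_mem_principalIdeal (he : x * x = x) (h : x ∈ principalIdeal a) :
    ∃ u v, u * a * v = x := by
  rcases h with rfl | ⟨u, rfl⟩ | ⟨v, rfl⟩ | ⟨u, v, rfl⟩
  · exact ⟨x, x, by rw [he, he]⟩
  · exact ⟨u, u * a, he⟩
  · exact ⟨a * v, v, by rw [mul_assoc, he]⟩
  · exact ⟨u, v, rfl⟩

end GreenRelations

section Stability

variable {S : Type*} [Semigroup S] [Finite (IdemE S)] {e f a b : S}

/-- In a local monoid `eSe` with finitely many idempotents, one-sided inverses are two-sided. -/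
theorem mul_eq_of_mul_eq_of_local (he : e * e = e) (hea : e * a = a) (hae : a * e = a)
    (hbe : b * e = b) (hba : b * a = e) : a * b = e := by
  let LocalIdem := {x : S // x * x = x ∧ e * x = x ∧ x * e = x}
  have : Finite LocalIdem :=
    Finite.of_injective (fun x : LocalIdem => (⟨x.1, x.2.1⟩ : IdemE S))
      (fun x y h => Subtype.ext (Subtype.mk.inj h))
  -- `x ↦ a x b` is injective on the idempotents of `eSe` (`b` undoes it), hence surjective.
  let conj : LocalIdem → LocalIdem := fun x =>
    ⟨a * x.1 * b, by grind, by rw [← mul_assoc, ← mul_assoc, hea],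
      by rw [mul_assoc, hbe]⟩
  have hconj : Function.Injective conj := by
    intro x y hxy
    have key : ∀ z : LocalIdem, b * (conj z).1 * a = z.1 := fun z => by
      obtain ⟨z, -, hez, hze⟩ := z
      change b * (a * z * b) * a = z
      grind
    exact Subtype.ext (by rw [← key x, ← key y, hxy])
  obtain ⟨x, hx⟩ := Finite.surjective_of_injective hconj ⟨e, he, he, he⟩
  have hx' : a * x.1 * b = e := congrArg Subtype.val hx
  calc a * b = a * b * (a * x.1 * b) := by rw [hx', mul_assoc, hbe]
    _ = a * x.1 * b := by simp only [← mul_assoc]; rw [mul_assoc a b, hba, hae]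
    _ = e := hx'

theorem mul_eq_right_of_mem_principalIdeal (he : e * e = e) (hf : f * f = f) (hef : e * f = f)
    (hmem : e ∈ principalIdeal f) : f * e = e := by
  obtain ⟨x, y, hxy⟩ := exists_mul_mul_eq_of_mem_principalIdeal he hmem
  have hinv : f * y * e * (e * x * f * e) = e :=
    mul_eq_of_mul_eq_of_local he (by grind) (by grind) (by grind) (by grind)
  calc f * e = f * (f * y * e * (e * x * f * e)) := by rw [hinv]
    _ = f * y * e * (e * x * f * e) := by simp only [← mul_assoc, hf]
    _ = e := hinv

theorem mul_eq_left_of_mem_principalIdeal (he : e * e = e) (hf : f * f = f) (hfe : f * e = f)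
    (hmem : e ∈ principalIdeal f) : e * f = e := by
  obtain ⟨x, y, hxy⟩ := exists_mul_mul_eq_of_mem_principalIdeal he hmem
  have hinv : e * f * y * e * (e * x * f) = e :=
    mul_eq_of_mul_eq_of_local he (by grind) (by grind) (by grind) (by grind)
  calc e * f = e * f * y * e * (e * x * f) * f := by rw [hinv]
    _ = e * f * y * e * (e * x * f) := by simp only [mul_assoc, hf]
    _ = e := hinv

end Stability

section FreeIdempotentGenerated

variable {S : Type*} [Semigroup S]

def igOf (e : IdemE S) : IG S := igBar (FreeSemigroup.of e)

theorem igBar_mul (x y : FreeSemigroup (IdemE S)) : igBar (x * y) = igBar x * igBar y := rfl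

theorem igBar_surjective : Function.Surjective (igBar (S := S)) := Quot.exists_rep

theorem igOf_mul_of_basicPair {e f g : IdemE S} (hb : BasicPair e f) (hg : (g : S) = e * f) :
    igOf e * igOf f = igOf g :=
  (Con.eq _).2 (ConGen.Rel.of _ _ ⟨e, f, g, hb, hg, rfl, rfl⟩)

theorem igOf_mul_of_mul_eq_left {e f : IdemE S} (h : (e : S) * f = e) : igOf e * igOf f = igOf e :=
  igOf_mul_of_basicPair (Or.inl h) h.symm

theorem igOf_mul_of_mul_eq_right {e f : IdemE S} (h : (e : S) * f = f) :
    igOf e * igOf f = igOf f :=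
  igOf_mul_of_basicPair (Or.inr (Or.inl h)) h.symm

theorem igOf_mul_self (e : IdemE S) : igOf e * igOf e = igOf e :=
  igOf_mul_of_mul_eq_left e.2

theorem igCon_le_ker_lift : igCon S ≤ Con.ker (FreeSemigroup.lift (Subtype.val : IdemE S → S)) :=
  Con.conGen_le.2 (by rintro _ _ ⟨e, f, g, -, hg, rfl, rfl⟩; simp [hg])

def igEval : IG S →ₙ* S where
  toFun x := Con.liftOn x (FreeSemigroup.lift Subtype.val) fun _ _ h => igCon_le_ker_lift h
  map_mul' x y := Con.induction_on₂ x y fun a b => map_mul (FreeSemigroup.lift Subtype.val) a b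

end FreeIdempotentGenerated

section Words

variable {S : Type*} [Semigroup S]

def prodMul (l : List (IdemE S)) (x : IG S) : IG S := l.foldr (fun a y => igOf a * y) x

def mulProd (x : IG S) (l : List (IdemE S)) : IG S := l.foldl (fun y a => y * igOf a) x

@[simp] theorem prodMul_nil (x : IG S) : prodMul [] x = x := rfl

@[simp] theorem prodMul_cons (a : IdemE S) (l : List (IdemE S)) (x : IG S) :
    prodMul (a :: l) x = igOf a * prodMul l x := rfl

@[simp] theorem mulProd_cons (x : IG S) (a : IdemE S) (l : List (IdemE S)) :
    mulProd x (a :: l) = mulProd (x * igOf a) l := rfl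

theorem prodMul_append (l m : List (IdemE S)) (x : IG S) :
    prodMul (l ++ m) x = prodMul l (prodMul m x) :=
  List.foldr_append

theorem mulProd_append (x : IG S) (l m : List (IdemE S)) :
    mulProd x (l ++ m) = mulProd (mulProd x l) m :=
  List.foldl_append

theorem prodMul_mul (l : List (IdemE S)) (x y : IG S) : prodMul l (x * y) = prodMul l x * y := by
  induction l with
  | nil => rfl
  | cons a l ih => rw [prodMul_cons, prodMul_cons, ih, mul_assoc]

theorem mulProd_mul (x y : IG S) (l : List (IdemE S)) : mulProd (x * y) l = x * mulProd y l := by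
  induction l generalizing y with
  | nil => rfl
  | cons a l ih => rw [mulProd_cons, mulProd_cons, mul_assoc, ih]

theorem prodMul_mem_principalIdeal (l : List (IdemE S)) {x a : IG S}
    (h : x ∈ principalIdeal a) : prodMul l x ∈ principalIdeal a := by
  induction l with
  | nil => exact h
  | cons b l ih => exact mul_mem_principalIdeal _ ih

theorem mulProd_mem_principalIdeal (l : List (IdemE S)) {x a : IG S}
    (h : x ∈ principalIdeal a) : mulProd x l ∈ principalIdeal a := by
  induction l generalizing x with
  | nil => exact h
  | cons b l ih => exact ih (mem_principalIdeal_mul _ h)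

def wordProd : List (IdemE S) → Option (IG S)
  | [] => none
  | a :: l => some (mulProd (igOf a) l)

theorem mulProd_append_cons (x : IG S) (l₁ : List (IdemE S)) (f : IdemE S)
    (l₂ : List (IdemE S)) : mulProd x (l₁ ++ f :: l₂) = x * prodMul l₁ (mulProd (igOf f) l₂) := by
  induction l₁ generalizing x with
  | nil => exact mulProd_mul x (igOf f) l₂
  | cons a l ih => rw [List.cons_append, mulProd_cons, ih, prodMul_cons, mul_assoc]

theorem wordProd_append_cons (l₁ : List (IdemE S)) (f : IdemE S) (l₂ : List (IdemE S)) :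
    wordProd (l₁ ++ f :: l₂) = some (prodMul l₁ (mulProd (igOf f) l₂)) := by
  cases l₁ with
  | nil => rfl
  | cons a l => rw [List.cons_append, wordProd, mulProd_append_cons, prodMul_cons]

theorem mem_principalIdeal_of_wordProd {l₁ l₂ : List (IdemE S)} {f : IdemE S} {d : IG S}
    (hd : wordProd (l₁ ++ f :: l₂) = some d) : d ∈ principalIdeal (igOf f) := by
  rw [wordProd_append_cons, Option.some_inj] at hd
  exact hd ▸ prodMul_mem_principalIdeal l₁
    (mulProd_mem_principalIdeal l₂ (mem_principalIdeal_self _))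

@[simp] theorem wordList_of (e : IdemE S) : wordList (FreeSemigroup.of e) = [e] := rfl

@[simp] theorem wordList_mul (x y : FreeSemigroup (IdemE S)) :
    wordList (x * y) = wordList x ++ wordList y := by
  simp [wordList]

theorem prodMul_wordList (w : FreeSemigroup (IdemE S)) (x : IG S) :
    prodMul (wordList w) x = igBar w * x := by
  induction w using FreeSemigroup.recOnMul generalizing x with
  | ih1 a => rfl
  | ih2 a w _ ih => rw [wordList_mul, prodMul_append, ih, igBar_mul, mul_assoc]; rfl

theorem mulProd_wordList (x : IG S) (w : FreeSemigroup (IdemE S)) :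
    mulProd x (wordList w) = x * igBar w := by
  induction w using FreeSemigroup.recOnMul generalizing x with
  | ih1 a => rfl
  | ih2 a w _ ih => rw [wordList_mul, mulProd_append, ih, igBar_mul, ← mul_assoc]; rfl

def MergeStep (L L' : List (IdemE S)) : Prop :=
  ∃ (l₁ l₂ : List (IdemE S)) (p q r : IdemE S), BasicPair p q ∧ (r : S) = p * q ∧
    L = l₁ ++ [p, q] ++ l₂ ∧ L' = l₁ ++ [r] ++ l₂

theorem MergeStep.append_left (m : List (IdemE S)) {L L' : List (IdemE S)} (h : MergeStep L L') :
    MergeStep (m ++ L) (m ++ L') := by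
  obtain ⟨l₁, l₂, p, q, r, hb, hr, rfl, rfl⟩ := h
  exact ⟨m ++ l₁, l₂, p, q, r, hb, hr, by simp, by simp⟩

theorem MergeStep.append_right (m : List (IdemE S)) {L L' : List (IdemE S)}
    (h : MergeStep L L') : MergeStep (L ++ m) (L' ++ m) := by
  obtain ⟨l₁, l₂, p, q, r, hb, hr, rfl, rfl⟩ := h
  exact ⟨l₁, l₂ ++ m, p, q, r, hb, hr, by simp, by simp⟩

theorem MergeStep.wordProd_eq {L L' : List (IdemE S)} (h : MergeStep L L') :
    wordProd L = wordProd L' := by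
  obtain ⟨l₁, l₂, p, q, r, hb, hr, rfl, rfl⟩ := h
  simp [wordProd_append_cons, igOf_mul_of_basicPair hb hr]

theorem eqvGen_mergeStep_of_igCon {w w' : FreeSemigroup (IdemE S)} (h : igCon S w w') :
    Relation.EqvGen MergeStep (wordList w) (wordList w') := by
  let c : Con (FreeSemigroup (IdemE S)) :=
    { r := fun a b => Relation.EqvGen MergeStep (wordList a) (wordList b)
      iseqv := ⟨fun _ => .refl _, .symm _ _, .trans _ _ _⟩
      mul' := fun {a b a' b'} h h' => by
        simp only [wordList_mul]
        exact .trans _ _ _ (h.lift (· ++ wordList a') fun _ _ => MergeStep.append_right _)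
          (h'.lift (wordList b ++ ·) fun _ _ => MergeStep.append_left _) }
  refine (Con.conGen_le (c := c)).2 ?_ h
  rintro _ _ ⟨e, f, g, hb, hg, rfl, rfl⟩
  exact .rel _ _ ⟨[], [], e, f, g, hb, hg, rfl, rfl⟩

end Words

section Seeds

variable {S : Type*} [Semigroup S]

def IsSeed (l₁ : List (IdemE S)) (f : IdemE S) (l₂ : List (IdemE S)) : Prop :=
  GreenL (prodMul l₁ (igOf f)) (igOf f) ∧ GreenR (igOf f) (mulProd (igOf f) l₂)

def DSeeded (d : IG S) (L : List (IdemE S)) : Prop :=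
  ∀ l₁ f l₂, L = l₁ ++ f :: l₂ → GreenD (igOf f) d → IsSeed l₁ f l₂

theorem IsSeed.of_greenR {l₁ m m' : List (IdemE S)} {a b : IdemE S} (h : IsSeed l₁ a m)
    (hab : igOf a * igOf b = igOf b) (hba : igOf b * igOf a = igOf a)
    (hm : mulProd (igOf a) m = mulProd (igOf b) m') : IsSeed l₁ b m' := by
  refine ⟨?_, (greenR_of_mul_eq hab hba).symm.trans (hm ▸ h.2)⟩
  rw [show prodMul l₁ (igOf b) = prodMul l₁ (igOf a) * igOf b by rw [← prodMul_mul, hab]]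
  exact h.1.mul_right hab

theorem IsSeed.of_greenL {m m' l₂ : List (IdemE S)} {a b : IdemE S} (h : IsSeed m a l₂)
    (hab : igOf a * igOf b = igOf a) (hba : igOf b * igOf a = igOf b)
    (hm : prodMul m (igOf a) = prodMul m' (igOf b)) : IsSeed m' b l₂ := by
  refine ⟨(hm ▸ h.1).trans (greenL_of_mul_eq hab hba), ?_⟩
  rw [show mulProd (igOf b) l₂ = igOf b * mulProd (igOf a) l₂ by rw [← mulProd_mul, hba]]
  exact h.2.mul_left hba

theorem dSeeded_singleton (d : IG S) (e : IdemE S) : DSeeded d [e] := by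
  intro l₁ f l₂ h _
  obtain ⟨rfl, rfl, rfl⟩ := List.singleton_eq_append_cons h
  exact ⟨GreenL.refl _, GreenR.refl _⟩

theorem DSeeded.replace {d : IG S} {l₁ s s' l₂ : List (IdemE S)} (h : DSeeded d (l₁ ++ s ++ l₂))
    (hl : ∀ x, prodMul s x = prodMul s' x) (hr : ∀ x, mulProd x s = mulProd x s')
    (hs' : ∀ k₁ f k₂, s' = k₁ ++ f :: k₂ → GreenD (igOf f) d → IsSeed (l₁ ++ k₁) f (k₂ ++ l₂)) :
    DSeeded d (l₁ ++ s' ++ l₂) := by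
  intro m₁ f m₂ hocc hD
  rcases List.append_append_eq_append_cons hocc with
    ⟨k, rfl, rfl⟩ | ⟨k₁, k₂, rfl, rfl, rfl⟩ | ⟨k, rfl, rfl⟩
  · have := h m₁ f (k ++ s ++ l₂) (by simp) hD
    simpa only [IsSeed, mulProd_append, hr] using this
  · exact hs' k₁ f k₂ rfl hD
  · have := h (l₁ ++ s ++ k) f m₂ (by simp) hD
    simpa only [IsSeed, prodMul_append, hl] using this

end Seeds

section Rewriting

variable {S : Type*} [Semigroup S]

theorem BasicPair.mul_mul_self_or {p q : IdemE S} (hb : BasicPair p q) :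
    (p : S) * q * p = p ∨ (q : S) * p * q = q := by
  rcases hb with h | h | h | h
  · exact Or.inl (by rw [h, p.2])
  · exact Or.inr (by rw [mul_assoc, h, q.2])
  · exact Or.inl (by rw [mul_assoc, h, p.2])
  · exact Or.inr (by rw [h, q.2])

variable {d : IG S} {l₁ l₂ : List (IdemE S)} {p q r : IdemE S}

theorem igOf_mul_igOf_of_eq_mul (hr : (r : S) = p * q) :
    igOf p * igOf r = igOf r ∧ igOf r * igOf q = igOf r :=
  ⟨igOf_mul_of_mul_eq_right (by rw [hr, ← mul_assoc, p.2]),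
    igOf_mul_of_mul_eq_left (by rw [hr, mul_assoc, q.2])⟩

theorem DSeeded.merge (hb : BasicPair p q) (hr : (r : S) = p * q)
    (h : DSeeded d (l₁ ++ [p, q] ++ l₂)) : DSeeded d (l₁ ++ [r] ++ l₂) := by
  have hpq := igOf_mul_of_basicPair hb hr
  obtain ⟨hpr, hrq⟩ := igOf_mul_igOf_of_eq_mul hr
  refine h.replace (fun x => by simp [← mul_assoc, hpq]) (fun x => by simp [mul_assoc, hpq]) ?_
  intro k₁ f k₂ hk hD
  obtain ⟨rfl, rfl, rfl⟩ := List.singleton_eq_append_cons hk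
  simp only [List.append_nil, List.nil_append]
  rcases hb.mul_mul_self_or with hpqp | hqpq
  · have hrp : igOf f * igOf p = igOf p := igOf_mul_of_mul_eq_right (by rw [hr, hpqp])
    exact (h l₁ p (q :: l₂) (by simp) (hD.of_greenR (greenR_of_mul_eq hpr hrp))).of_greenR
      hpr hrp (by simp [hpq])
  · have hqr : igOf q * igOf f = igOf q := igOf_mul_of_mul_eq_left (by rw [hr, ← mul_assoc, hqpq])
    exact (h (l₁ ++ [p]) q l₂ (by simp) (hD.of_greenL (greenL_of_mul_eq hqr hrq))).of_greenL
      hqr hrq (by simp [prodMul_append, hpq])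

/-- Undoing a merge keeps the seeds: stability of `S` forces the new letters into the
`𝓡`- or `𝓛`-class of the letter they replace. -/
theorem DSeeded.expand [Finite (IdemE S)] (hb : BasicPair p q) (hr : (r : S) = p * q)
    (hd : wordProd (l₁ ++ [r] ++ l₂) = some d) (h : DSeeded d (l₁ ++ [r] ++ l₂)) :
    DSeeded d (l₁ ++ [p, q] ++ l₂) := by
  have hpq := igOf_mul_of_basicPair hb hr
  obtain ⟨hpr, hrq⟩ := igOf_mul_igOf_of_eq_mul hr
  have hJ (f : IdemE S) (hD : GreenD (igOf f) d) : (f : S) ∈ principalIdeal (r : S) :=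
    map_mem_principalIdeal igEval (principalIdeal_trans hD.mem_principalIdeal
      (mem_principalIdeal_of_wordProd (by simpa using hd)))
  refine h.replace (fun x => by simp [← mul_assoc, hpq]) (fun x => by simp [mul_assoc, hpq]) ?_
  intro k₁ f k₂ hk hD
  have hDr := h l₁ r l₂ (by simp)
  rcases List.pair_eq_append_cons hk with ⟨rfl, rfl, rfl⟩ | ⟨rfl, rfl, rfl⟩
  · have hrp : igOf r * igOf f = igOf f := igOf_mul_of_mul_eq_right
      (mul_eq_right_of_mem_principalIdeal f.2 r.2 (by rw [hr, ← mul_assoc, f.2]) (hJ f hD))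
    simpa using (hDr (hD.of_greenR (greenR_of_mul_eq hpr hrp).symm)).of_greenR hrp hpr
      (m' := q :: l₂) (by simp [hpq])
  · have hqr : igOf f * igOf r = igOf f := igOf_mul_of_mul_eq_left
      (mul_eq_left_of_mem_principalIdeal f.2 r.2 (by rw [hr, mul_assoc, f.2]) (hJ f hD))
    simpa using (hDr (hD.of_greenL (greenL_of_mul_eq hqr hrq).symm)).of_greenL hrq hqr
      (m' := l₁ ++ [p]) (by simp [prodMul_append, hpq])

end Rewriting

section SeedInvariance

variable {S : Type*} [Semigroup S] [Finite (IdemE S)]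

theorem MergeStep.dSeeded_iff {d : IG S} {L L' : List (IdemE S)} (h : MergeStep L L') :
    wordProd L = some d ∧ DSeeded d L ↔ wordProd L' = some d ∧ DSeeded d L' := by
  rw [h.wordProd_eq]
  obtain ⟨l₁, l₂, p, q, r, hb, hr, rfl, rfl⟩ := h
  exact and_congr_right fun hd => ⟨DSeeded.merge hb hr, DSeeded.expand hb hr hd⟩

theorem dSeeded_iff_of_eqvGen {d : IG S} {L L' : List (IdemE S)}
    (h : Relation.EqvGen MergeStep L L') :
    wordProd L = some d ∧ DSeeded d L ↔ wordProd L' = some d ∧ DSeeded d L' := by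
  induction h with
  | rel _ _ h => exact h.dSeeded_iff
  | refl => rfl
  | symm _ _ _ ih => exact ih.symm
  | trans _ _ _ _ _ ih₁ ih₂ => exact ih₁.trans ih₂

theorem isSeed_of_igBar_eq {W : FreeSemigroup (IdemE S)} {e : IdemE S} {l₁ l₂ : List (IdemE S)}
    (hW : igBar W = igOf e) (hL : wordList W = l₁ ++ e :: l₂) : IsSeed l₁ e l₂ := by
  have hchain := eqvGen_mergeStep_of_igCon ((Con.eq _).1 hW.symm)
  have := (dSeeded_iff_of_eqvGen hchain).1 ⟨rfl, dSeeded_singleton (igOf e) e⟩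
  rw [hL] at this
  exact this.2 l₁ e l₂ rfl (GreenD.refl _)

end SeedInvariance

section OptionalWords

variable {S : Type*} [Semigroup S]

def optWordList : Option (FreeSemigroup (IdemE S)) → List (IdemE S)
  | none => []
  | some w => wordList w

theorem wordList_withCtx (u v : Option (FreeSemigroup (IdemE S))) (e : IdemE S) :
    wordList (withCtx u (FreeSemigroup.of e) v) = optWordList u ++ e :: optWordList v := by
  cases u <;> cases v <;> simp [withCtx, optWordList]

theorem prodMul_optWordList (u : Option (FreeSemigroup (IdemE S))) (e : IdemE S) :
    prodMul (optWordList u) (igOf e) = igBar (leftCtx u (FreeSemigroup.of e)) := by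
  cases u with
  | none => rfl
  | some u => exact prodMul_wordList u _

theorem mulProd_optWordList (e : IdemE S) (v : Option (FreeSemigroup (IdemE S))) :
    mulProd (igOf e) (optWordList v) = igBar (rightCtx (FreeSemigroup.of e) v) := by
  cases v with
  | none => rfl
  | some v => exact mulProd_wordList _ v

theorem igBar_leftCtx_mul_igOf (u : Option (FreeSemigroup (IdemE S))) (e : IdemE S) :
    igBar (leftCtx u (FreeSemigroup.of e)) * igOf e = igBar (leftCtx u (FreeSemigroup.of e)) := by
  cases u with
  | none => exact igOf_mul_self e
  | some u => exact (mul_assoc (igBar u) _ _).trans (congrArg _ (igOf_mul_self e))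

theorem igOf_mul_igBar_rightCtx (e : IdemE S) (v : Option (FreeSemigroup (IdemE S))) :
    igOf e * igBar (rightCtx (FreeSemigroup.of e) v) = igBar (rightCtx (FreeSemigroup.of e) v) := by
  cases v with
  | none => exact igOf_mul_self e
  | some v => exact (mul_assoc _ _ (igBar v)).symm.trans (congrArg (· * _) (igOf_mul_self e))

end OptionalWords

theorem stmt16 {S : Type*} [Semigroup S] [Finite (IdemE S)]
    (w : FreeSemigroup (IdemE S)) (u v : Option (FreeSemigroup (IdemE S)))
    (e : IdemE S) (hw : w = withCtx u (FreeSemigroup.of e) v)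
    (hD : GreenD (igBar (FreeSemigroup.of e)) (igBar w)) :
    IsRegularElem (igBar w) ∧
    GreenL (igBar (leftCtx u (FreeSemigroup.of e))) (igBar (FreeSemigroup.of e)) ∧
    GreenR (igBar (FreeSemigroup.of e)) (igBar (rightCtx (FreeSemigroup.of e) v)) := by
  have he : IsRegularElem (igOf e) := ⟨igOf e, by rw [igOf_mul_self, igOf_mul_self]⟩
  refine ⟨he.of_greenD hD, ?_⟩
  obtain ⟨x, y, hxy⟩ := exists_mul_mul_eq_of_mem_principalIdeal (igOf_mul_self e)
    hD.mem_principalIdeal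
  obtain ⟨x', rfl⟩ := igBar_surjective x
  obtain ⟨y', rfl⟩ := igBar_surjective y
  have hseed := isSeed_of_igBar_eq (W := x' * w * y') hxy
    (l₁ := wordList x' ++ optWordList u) (l₂ := optWordList v ++ wordList y')
    (by simp [hw, wordList_withCtx])
  rw [IsSeed, prodMul_append, prodMul_wordList, prodMul_optWordList, mulProd_append,
    mulProd_optWordList, mulProd_wordList] at hseed
  exact ⟨hseed.1.of_mul_left (igBar_leftCtx_mul_igOf u e),
    hseed.2.of_mul_right (igOf_mul_igBar_rightCtx e v)⟩
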